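/- arXiv:1310.5919 — 3 statements merged into one kernel-verified Lean document; each statement's English description precedes it below -/
import Mathlib

section
/- Let d ≥ 0, let N ≥ 1, and let n_0, …, n_d be integers with n_i ≥ 1 for all i. Then F(N, n_0, …, n_d) = Σ_{(j_0,…,j_d) ∈ {0,1}^{d+1}} F(N−1, n_0 − j_0, …, n_d − j_d). -/
/-- The Vandermonde product `∏_{i<j} (x i - x j)`. -/
def vmd {k : ℕ} {R : Type*} [CommRing R] (x : Fin k → R) : R :=
  ∏ i : Fin k, ∏ j ∈ Finset.univ.filter (fun j => i < j), (x i - x j)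

open Polynomial Finset Matrix

noncomputable def pkey (u : ℚ) (c : ℕ) : ℚ[X] := (C u - X) * X ^ c + X * (X - 1) ^ c

lemma X_sub_one_pow (c : ℕ) : ((X : ℚ[X]) - 1) ^ c = (X + C (-1 : ℚ)) ^ c := by
  rw [C_neg, C_1]; ring

lemma pkey_coeff_gt (u : ℚ) (c t : ℕ) (ht : c < t) : (pkey u c).coeff t = 0 := by
  obtain ⟨s, rfl⟩ : ∃ s, t = s + 1 := ⟨t - 1, by omega⟩
  simp only [pkey, coeff_add, sub_mul, coeff_sub, coeff_C_mul, coeff_X_pow, coeff_X_mul,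
    X_sub_one_pow, coeff_X_add_C_pow]
  rcases eq_or_lt_of_le (Nat.succ_le_of_lt ht) with h | h
  · have hs : s = c := by omega
    simp [hs, ← h]
  · have h2 : c.choose s = 0 := Nat.choose_eq_zero_of_lt (by omega)
    simp [h2, if_neg (by omega : ¬ s + 1 = c), if_neg (by omega : ¬ s = c)]

lemma pkey_natDegree_le (u : ℚ) (c : ℕ) : (pkey u c).natDegree ≤ c :=
  natDegree_le_iff_coeff_eq_zero.2 fun t ht => pkey_coeff_gt u c t ht

lemma pkey_coeff_self (u : ℚ) (c : ℕ) : (pkey u c).coeff c = u - c := by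
  rcases Nat.eq_zero_or_pos c with rfl | hc
  · simp [pkey]
  · obtain ⟨s, rfl⟩ : ∃ s, c = s + 1 := ⟨c - 1, by omega⟩
    simp only [pkey, coeff_add, sub_mul, coeff_sub, coeff_C_mul, coeff_X_pow, coeff_X_mul,
      X_sub_one_pow, coeff_X_add_C_pow]
    have h5 : (s+1).choose s = s + 1 := Nat.choose_succ_self_right s
    simp [h5, if_neg (by omega : ¬ s = s + 1)]
    push_cast
    ring

lemma pkey_eval (u x : ℚ) (c : ℕ) : (pkey u c).eval x = (u - x) * x ^ c + x * (x - 1) ^ c := by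
  simp [pkey]

lemma key_detA (k : ℕ) (u : ℚ) (x : Fin k → ℚ) :
    (Matrix.of fun i c : Fin k => (pkey u (c : ℕ)).eval (x i)).det
      = (∏ c : Fin k, (u - (c : ℕ))) * (Matrix.vandermonde x).det := by
  rw [Matrix.eval_matrixOfPolynomials_eq_vandermonde_mul_matrixOfPolynomials x
      (fun c => pkey u (c : ℕ)) (fun c => pkey_natDegree_le u c), Matrix.det_mul]
  rw [Matrix.det_of_upperTriangular (M := Matrix.of fun i c : Fin k => (pkey u (c:ℕ)).coeff i)
      (fun i c h => pkey_coeff_gt u c i h)]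
  simp only [Matrix.of_apply, pkey_coeff_self]
  ring

lemma key_detB (k : ℕ) (u : ℚ) (x : Fin k → ℚ) :
    (Matrix.of fun i c : Fin k => (pkey u (c : ℕ)).eval (x i)).det
      = ∑ j : Fin k → Fin 2, (Matrix.vandermonde fun i => x i - ((j i : ℕ) : ℚ)).det *
          ∏ i, (if j i = 0 then u - x i else x i) := by
  have hrow : (Matrix.of fun i c : Fin k => (pkey u (c : ℕ)).eval (x i)) =
      fun i => ∑ t : Fin 2, (if t = 0 then u - x i else x i) •
        (fun c : Fin k => (x i - ((t : ℕ) : ℚ)) ^ (c : ℕ)) := by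
    ext i c
    simp [pkey_eval, Fin.sum_univ_two]
  show Matrix.detRowAlternating _ = _
  rw [hrow]
  have hms := MultilinearMap.map_sum
      (Matrix.detRowAlternating (n := Fin k) (R := ℚ)).toMultilinearMap
      (g := fun i (t : Fin 2) =>
        (if t = 0 then u - x i else x i) • fun c : Fin k => (x i - ((t : ℕ) : ℚ)) ^ (c : ℕ))
  simp only [AlternatingMap.coe_multilinearMap] at hms
  rw [hms]
  refine Finset.sum_congr rfl fun j _ => ?_
  have hsm := MultilinearMap.map_smul_univ
      (Matrix.detRowAlternating (n := Fin k) (R := ℚ)).toMultilinearMap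
      (fun i => if j i = 0 then u - x i else x i)
      (fun i => fun c : Fin k => (x i - ((j i : ℕ) : ℚ)) ^ (c : ℕ))
  simp only [AlternatingMap.coe_multilinearMap] at hsm
  rw [hsm, smul_eq_mul, mul_comm]
  rfl

lemma vmd_eq_det (k : ℕ) (x : Fin k → ℚ) :
    vmd x = (∏ i : Fin k, ∏ j ∈ Finset.Ioi i, (-1 : ℚ)) * (Matrix.vandermonde x).det := by
  rw [Matrix.det_vandermonde, ← Finset.prod_mul_distrib]
  unfold vmd
  refine Finset.prod_congr rfl fun i _ => ?_
  rw [← Finset.prod_mul_distrib]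
  have h : Finset.univ.filter (fun j => i < j) = Finset.Ioi i := by
    ext j; simp
  rw [h]
  exact Finset.prod_congr rfl fun j _ => by ring

lemma key_vmd (k : ℕ) (u : ℚ) (x : Fin k → ℚ) :
    (∏ c : Fin k, (u - (c : ℕ))) * vmd x
      = ∑ j : Fin k → Fin 2, vmd (fun i => x i - ((j i : ℕ) : ℚ)) *
          ∏ i, (if j i = 0 then u - x i else x i) := by
  simp only [vmd_eq_det]
  rw [mul_left_comm, ← key_detA, key_detB, Finset.mul_sum]
  exact Finset.sum_congr rfl fun j _ => by ring

/-- `F(N, n_0, …, n_d) = (∏_i ∏_{k<n_i} (N+i-k)) · V(m_0,…,m_d) / (m_0! ⋯ m_d!)`,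
where `m_i = n_i + d - i`. -/
def Fq (d N : ℕ) (n : Fin (d + 1) → ℕ) : ℚ :=
  (∏ i : Fin (d + 1), ∏ k ∈ Finset.range (n i), ((N : ℚ) + (i : ℕ) - (k : ℕ))) *
    vmd (fun i : Fin (d + 1) => ((n i + d - (i : ℕ) : ℕ) : ℚ)) /
      ∏ i : Fin (d + 1), (Nat.factorial (n i + d - (i : ℕ)) : ℚ)

lemma Fq_eq (d N : ℕ) (n : Fin (d+1) → ℕ) (hn : ∀ i, 1 ≤ n i) :
    Fq d N n = (∏ i : Fin (d+1), ((N:ℚ) + i)) *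
      (∏ i : Fin (d+1), ∏ k ∈ Finset.range (n i - 1), ((N:ℚ) - 1 + i - k)) *
      vmd (fun i : Fin (d+1) => ((n i + d - (i:ℕ) : ℕ) : ℚ)) /
      ∏ i : Fin (d+1), ((n i + d - (i:ℕ)).factorial : ℚ) := by
  unfold Fq
  rw [div_eq_div_iff] <;> try
    (exact Finset.prod_ne_zero_iff.2 fun i _ => Nat.cast_ne_zero.2 (Nat.factorial_ne_zero _))
  have h : ∀ i : Fin (d+1), (∏ k ∈ Finset.range (n i), ((N:ℚ) + i - k))
      = ((N:ℚ) + i) * ∏ k ∈ Finset.range (n i - 1), ((N:ℚ) - 1 + i - k) := by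
    intro i
    have hni : n i - 1 + 1 = n i := by have := hn i; omega
    rw [← hni, Finset.prod_range_succ']
    simp only [Nat.cast_zero, sub_zero, Nat.cast_add, Nat.cast_one]
    rw [mul_comm]
    congr 1
    exact Finset.prod_congr rfl fun k _ => by push_cast; ring
  rw [Finset.prod_congr rfl fun i _ => h i, Finset.prod_mul_distrib]

lemma Fq_pred_eq (d N : ℕ) (hN : 1 ≤ N) (n : Fin (d+1) → ℕ) (hn : ∀ i, 1 ≤ n i)
    (j : Fin (d+1) → Fin 2) :
    Fq d (N - 1) (fun i => n i - (j i : ℕ)) =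
      (∏ i : Fin (d+1), ∏ k ∈ Finset.range (n i - 1), ((N:ℚ) - 1 + i - k)) *
      (vmd (fun i : Fin (d+1) => ((n i + d - (i:ℕ) : ℕ) : ℚ) - ((j i : ℕ) : ℚ)) *
        ∏ i : Fin (d+1), (if j i = 0
          then ((N:ℚ) + (d:ℕ)) - ((n i + d - (i:ℕ) : ℕ) : ℚ)
          else ((n i + d - (i:ℕ) : ℕ) : ℚ))) /
      ∏ i : Fin (d+1), ((n i + d - (i:ℕ)).factorial : ℚ) := by
  have hj : ∀ i, (j i : ℕ) ≤ 1 := fun i => by omega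
  have him : ∀ i : Fin (d+1), (i:ℕ) ≤ d := fun i => by omega
  have hm1 : ∀ i : Fin (d+1), 1 ≤ n i + d - (i:ℕ) := fun i => by
    have := hn i; have := him i; omega
  unfold Fq
  -- the vandermonde argument
  have hvmd : (fun i : Fin (d+1) => (((fun i => n i - (j i : ℕ)) i + d - (i:ℕ) : ℕ) : ℚ))
      = fun i : Fin (d+1) => ((n i + d - (i:ℕ) : ℕ) : ℚ) - ((j i : ℕ) : ℚ) := by
    funext i
    have h1 : n i - (j i : ℕ) + d - (i:ℕ) = (n i + d - (i:ℕ)) - (j i : ℕ) := by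
      have := hn i; have := him i; have := hj i; omega
    rw [h1, Nat.cast_sub (by have := hm1 i; have := hj i; omega)]
  rw [hvmd]
  -- the factorials
  have hfact : ∀ i : Fin (d+1),
      (((n i - (j i : ℕ)) + d - (i:ℕ)).factorial : ℚ) *
        (if j i = 0 then 1 else ((n i + d - (i:ℕ) : ℕ) : ℚ))
      = ((n i + d - (i:ℕ)).factorial : ℚ) := by
    intro i
    have h1 : n i - (j i : ℕ) + d - (i:ℕ) = (n i + d - (i:ℕ)) - (j i : ℕ) := by
      have := hn i; have := him i; have := hj i; omega
    rcases (by omega : (j i : ℕ) = 0 ∨ (j i : ℕ) = 1) with h | h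
    · have hz : j i = 0 := Fin.ext h
      simp [hz, h1, h]
    · have hz : j i = 1 := Fin.ext h
      have h2 : n i + d - (i:ℕ) = ((n i + d - (i:ℕ)) - 1) + 1 := by have := hm1 i; omega
      rw [if_neg (by simp [hz]), h1, h]
      conv_rhs => rw [h2]
      rw [Nat.factorial_succ, Nat.cast_mul, ← h2]
      push_cast
      ring
  -- the numerator products
  have hprod : ∀ i : Fin (d+1),
      (∏ k ∈ Finset.range (n i - (j i : ℕ)), (((N - 1 : ℕ):ℚ) + i - k))
      = (∏ k ∈ Finset.range (n i - 1), ((N:ℚ) - 1 + i - k)) *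
        (if j i = 0 then ((N:ℚ) + (d:ℕ)) - ((n i + d - (i:ℕ) : ℕ) : ℚ) else 1) := by
    intro i
    have hc : ((N - 1 : ℕ) : ℚ) = (N:ℚ) - 1 := by
      rw [Nat.cast_sub hN]; norm_num
    rcases (by omega : (j i : ℕ) = 0 ∨ (j i : ℕ) = 1) with h | h
    · have hz : j i = 0 := Fin.ext h
      have h2 : n i - (j i : ℕ) = (n i - 1) + 1 := by have := hn i; omega
      rw [h2, Finset.prod_range_succ, if_pos hz, hc]
      congr 1
      rw [Nat.cast_sub (show 1 ≤ n i from hn i),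
        Nat.cast_sub (show (i:ℕ) ≤ n i + d by have := him i; omega)]
      push_cast
      ring
    · have h2 : n i - (j i : ℕ) = n i - 1 := by omega
      have hz : j i = 1 := Fin.ext h
      rw [h2, if_neg (by simp [hz])]
      simp only [hc, mul_one]
  rw [Finset.prod_congr rfl fun i _ => hprod i]
  rw [div_eq_div_iff
    (Finset.prod_ne_zero_iff.2 fun i _ => Nat.cast_ne_zero.2 (Nat.factorial_ne_zero _))
    (Finset.prod_ne_zero_iff.2 fun i _ => Nat.cast_ne_zero.2 (Nat.factorial_ne_zero _))]
  rw [Finset.prod_mul_distrib]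
  rw [show (∏ x : Fin (d+1), ((n x + d - (x:ℕ)).factorial : ℚ))
      = (∏ x : Fin (d+1), (((n x - (j x : ℕ)) + d - (x:ℕ)).factorial : ℚ)) *
        ∏ x : Fin (d+1), (if j x = 0 then 1 else ((n x + d - (x:ℕ) : ℕ) : ℚ)) from by
    rw [← Finset.prod_mul_distrib]; exact (Finset.prod_congr rfl fun i _ => hfact i).symm]
  have hifs : ∀ i : Fin (d+1),
      (if j i = 0 then ((N:ℚ) + (d:ℕ)) - ((n i + d - (i:ℕ) : ℕ) : ℚ) else 1) *
        (if j i = 0 then 1 else ((n i + d - (i:ℕ) : ℕ) : ℚ))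
      = (if j i = 0 then ((N:ℚ) + (d:ℕ)) - ((n i + d - (i:ℕ) : ℕ) : ℚ)
          else ((n i + d - (i:ℕ) : ℕ) : ℚ)) := by
    intro i
    rcases eq_or_ne (j i) 0 with h | h <;> simp [h]
  have hcomb : (∏ x : Fin (d+1), (if j x = 0 then ((N:ℚ) + (d:ℕ)) - ((n x + d - (x:ℕ) : ℕ) : ℚ) else 1)) *
      (∏ x : Fin (d+1), (if j x = 0 then 1 else ((n x + d - (x:ℕ) : ℕ) : ℚ)))
      = ∏ x : Fin (d+1), (if j x = 0 then ((N:ℚ) + (d:ℕ)) - ((n x + d - (x:ℕ) : ℕ) : ℚ)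
          else ((n x + d - (x:ℕ) : ℕ) : ℚ)) := by
    rw [← Finset.prod_mul_distrib]; exact Finset.prod_congr rfl fun i _ => hifs i
  linear_combination ((∏ i : Fin (d+1), ∏ k ∈ Finset.range (n i - 1), ((N:ℚ) - 1 + (i:ℕ) - k)) *
    (vmd fun i : Fin (d+1) => ((n i + d - (i:ℕ) : ℕ) : ℚ) - ((j i : ℕ) : ℚ)) *
    (∏ x : Fin (d+1), (((n x - (j x : ℕ)) + d - (x:ℕ)).factorial : ℚ))) * hcomb

/-- Equation (1) of the paper: for `N ≥ 1` and `n_i ≥ 1` for all `i`,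
`F(N, n_0, …, n_d) = Σ_{j ∈ {0,1}^{d+1}} F(N-1, n_0 - j_0, …, n_d - j_d)`. -/
theorem statement5 (d N : ℕ) (hN : 1 ≤ N) (n : Fin (d + 1) → ℕ) (hn : ∀ i, 1 ≤ n i) :
    Fq d N n = ∑ j : Fin (d + 1) → Fin 2, Fq d (N - 1) (fun i => n i - (j i : ℕ)) := by
  rw [Fq_eq d N n hn, Finset.sum_congr rfl fun j _ => Fq_pred_eq d N hN n hn j]
  rw [← Finset.sum_div, ← Finset.mul_sum]
  have hP : (∏ c : Fin (d+1), ((N:ℚ) + (d:ℕ) - ((c:ℕ) : ℚ))) = ∏ i : Fin (d+1), ((N:ℚ) + i) := by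
    rw [Fin.prod_univ_eq_prod_range (fun c => (N:ℚ) + (d:ℕ) - (c:ℕ)),
      Fin.prod_univ_eq_prod_range (fun i => (N:ℚ) + i),
      ← Finset.prod_range_reflect (fun c => (N:ℚ) + c) (d+1)]
    refine Finset.prod_congr rfl fun c hc => ?_
    have hcd : c ≤ d := by simp only [Finset.mem_range] at hc; omega
    show (N:ℚ) + (d:ℕ) - (c:ℕ) = (N:ℚ) + ((d + 1 - 1 - c : ℕ) : ℚ)
    rw [show d + 1 - 1 - c = d - c from by omega, Nat.cast_sub hcd]
    ring
  have hkey := key_vmd (d+1) ((N:ℚ) + (d:ℕ)) (fun i : Fin (d+1) => ((n i + d - (i:ℕ) : ℕ) : ℚ))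
  rw [hP] at hkey
  rw [← hkey]
  ring
end

section
/- Let λ = (n_0, …, n_d) be a partition with n_0 ≥ … ≥ n_d ≥ 1, set m_i = n_i + d − i, and fix a row index i with 0 ≤ i ≤ d. Then the product of the hook lengths of the cells in row i of λ satisfies (∏_{j=0}^{n_i−1} h(i,j)) · ∏_{j=i+1}^{d} (m_i − m_j) = m_i!. -/
/-!
Write `m_k = n_k + d - k`. The hook lengths in row `i` are strictly decreasing along the row
and lie in `[1, m_i]`, the numbers `m_i - m_k` for `k > i` are distinct and lie in the same
interval, and no hook length equals such a difference: `h(i,j) = m_i - m_k` would force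
`(λ'_j - k) + (n_k - j) = 1`, while the two brackets are both positive or both non-positive.
Counting, the `n_i + (d - i) = m_i` numbers fill `[1, m_i]` exactly, so their product is `m_i!`.
-/

/-- The conjugate partition of `(n 0, …, n d)`: `conjLen j` is the number of indices `i`
with `n i > j`, i.e. the length of column `j`. -/
def conjLen (d : ℕ) (n : Fin (d + 1) → ℕ) (j : ℕ) : ℕ :=
  (Finset.univ.filter (fun i : Fin (d + 1) => j < n i)).card

/-- The hook length of the cell `(i, j)` of the partition `λ = (n 0, …, n d)`:
`h(i,j) = (λ_i - j) + (λ'_j - i) - 1`. -/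
def hookLen (d : ℕ) (n : Fin (d + 1) → ℕ) (i : Fin (d + 1)) (j : ℕ) : ℕ :=
  (n i - j) + (conjLen d n j - (i : ℕ)) - 1

open Finset

def shiftedLen (d : ℕ) (n : Fin (d + 1) → ℕ) (k : Fin (d + 1)) : ℕ :=
  n k + d - (k : ℕ)

section

variable {d : ℕ} {n : Fin (d + 1) → ℕ}

lemma conjLen_antitone : Antitone (conjLen d n) := fun _ _ hjj' =>
  card_le_card fun _ hx => by
    simp only [mem_filter, mem_univ, true_and] at hx ⊢
    omega

lemma conjLen_le (j : ℕ) : conjLen d n j ≤ d + 1 :=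
  (card_filter_le _ _).trans_eq (card_fin _)

lemma lt_conjLen_iff (hn : Antitone n) (j : ℕ) (k : Fin (d + 1)) :
    (k : ℕ) < conjLen d n j ↔ j < n k := by
  unfold conjLen
  constructor
  · intro hk
    by_contra! hnk
    have hsub : univ.filter (fun i : Fin (d + 1) => j < n i) ⊆ Iio k := fun x hx => by
      simp only [mem_filter, mem_univ, true_and] at hx
      exact mem_Iio.mpr (lt_of_not_ge fun hkx => absurd (hn hkx) (by omega))
    have := card_le_card hsub
    rw [Fin.card_Iio] at this
    omega
  · intro hj
    have hsub : Iic k ⊆ univ.filter (fun i : Fin (d + 1) => j < n i) := fun x hx => by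
      simp only [mem_filter, mem_univ, true_and]
      exact hj.trans_le (hn (mem_Iic.mp hx))
    have := card_le_card hsub
    rw [Fin.card_Iic] at this
    omega

lemma shiftedLen_strictAnti (hn : Antitone n) : StrictAnti (shiftedLen d n) := by
  intro k l hkl
  have hnl := hn hkl.le
  have hkl' : (k : ℕ) < l := hkl
  have hld := l.is_le
  unfold shiftedLen
  omega

lemma hookLen_mem_Icc (hn : Antitone n) {i : Fin (d + 1)} {j : ℕ} (hj : j < n i) :
    hookLen d n i j ∈ Icc 1 (shiftedLen d n i) := by
  have hi := (lt_conjLen_iff hn j i).mpr hj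
  have hc := conjLen_le (n := n) j
  simp only [mem_Icc, hookLen, shiftedLen]
  omega

lemma hookLen_strictAntiOn (hn : Antitone n) (i : Fin (d + 1)) :
    StrictAntiOn (hookLen d n i) (Set.Iio (n i)) := by
  intro j hj j' hj' hjj'
  have hi := (lt_conjLen_iff hn j i).mpr hj
  have hi' := (lt_conjLen_iff hn j' i).mpr hj'
  have hc := conjLen_antitone (n := n) hjj'.le
  simp only [Set.mem_Iio] at hj hj'
  unfold hookLen
  omega

lemma sub_shiftedLen_mem_Icc (hn : Antitone n) {i k : Fin (d + 1)} (hik : i < k) :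
    shiftedLen d n i - shiftedLen d n k ∈ Icc 1 (shiftedLen d n i) := by
  have := shiftedLen_strictAnti hn hik
  simp only [mem_Icc]
  omega

lemma hookLen_ne_sub_shiftedLen (hn : Antitone n) {i k : Fin (d + 1)} (hik : i < k) {j : ℕ}
    (hj : j < n i) : hookLen d n i j ≠ shiftedLen d n i - shiftedLen d n k := by
  have hi := (lt_conjLen_iff hn j i).mpr hj
  have hk := lt_conjLen_iff hn j k
  have hc := conjLen_le (n := n) j
  have hnk := hn hik.le
  have hik' : (i : ℕ) < k := hik
  have hkd := k.is_le
  unfold hookLen shiftedLen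
  by_cases hjk : j < n k
  · have := hk.mpr hjk
    omega
  · have := mt hk.mp hjk
    omega

lemma hookLen_injOn (hn : Antitone n) (i : Fin (d + 1)) :
    Set.InjOn (hookLen d n i) (range (n i)) := by
  simpa only [coe_range] using (hookLen_strictAntiOn hn i).injOn

lemma sub_shiftedLen_injOn (hn : Antitone n) (i : Fin (d + 1)) :
    Set.InjOn (fun k => shiftedLen d n i - shiftedLen d n k) (Ioi i) := by
  intro k hk l hl hkl
  have := shiftedLen_strictAnti hn (mem_Ioi.mp hk)
  have := shiftedLen_strictAnti hn (mem_Ioi.mp hl)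
  exact (shiftedLen_strictAnti hn).injective (by simp only at hkl; omega)

lemma disjoint_hookLen_sub_shiftedLen (hn : Antitone n) (i : Fin (d + 1)) :
    Disjoint ((range (n i)).image (hookLen d n i))
      ((Ioi i).image fun k => shiftedLen d n i - shiftedLen d n k) := by
  simp only [disjoint_left, mem_image, mem_range, mem_Ioi, not_exists, not_and]
  rintro _ ⟨j, hj, rfl⟩ k hik heq
  exact hookLen_ne_sub_shiftedLen hn hik hj heq.symm

lemma image_hookLen_union_sub_shiftedLen (hn : Antitone n) (i : Fin (d + 1)) :
    (range (n i)).image (hookLen d n i) ∪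
        (Ioi i).image (fun k => shiftedLen d n i - shiftedLen d n k) =
      Icc 1 (shiftedLen d n i) := by
  refine eq_of_subset_of_card_le (union_subset ?_ ?_) ?_
  · simp only [subset_iff, mem_image, mem_range]
    rintro _ ⟨j, hj, rfl⟩
    exact hookLen_mem_Icc hn hj
  · simp only [subset_iff, mem_image, mem_Ioi]
    rintro _ ⟨k, hik, rfl⟩
    exact sub_shiftedLen_mem_Icc hn hik
  · rw [card_union_of_disjoint (disjoint_hookLen_sub_shiftedLen hn i),
      card_image_of_injOn (hookLen_injOn hn i),
      card_image_of_injOn (sub_shiftedLen_injOn hn i), card_range, Fin.card_Ioi,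
      Nat.card_Icc, shiftedLen]
    omega

lemma prod_hookLen_mul_prod_sub_shiftedLen (hn : Antitone n) (i : Fin (d + 1)) :
    (∏ j ∈ range (n i), hookLen d n i j) *
        ∏ k ∈ Ioi i, (shiftedLen d n i - shiftedLen d n k) =
      (shiftedLen d n i).factorial := by
  have hHook : ∏ h ∈ (range (n i)).image (hookLen d n i), h =
      ∏ j ∈ range (n i), hookLen d n i j :=
    prod_image (hookLen_injOn hn i)
  have hSub : ∏ h ∈ (Ioi i).image (fun k => shiftedLen d n i - shiftedLen d n k), h =
      ∏ k ∈ Ioi i, (shiftedLen d n i - shiftedLen d n k) :=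
    prod_image (sub_shiftedLen_injOn hn i)
  rw [← hHook, ← hSub, ← prod_union (disjoint_hookLen_sub_shiftedLen hn i),
    image_hookLen_union_sub_shiftedLen hn i, ← Ico_add_one_right_eq_Icc,
    prod_Ico_id_eq_factorial]

end

theorem statement11_general (d : ℕ) (n : Fin (d + 1) → ℕ)
    (hmono : ∀ i j : Fin (d + 1), i ≤ j → n j ≤ n i)
    (i : Fin (d + 1)) :
    (∏ j ∈ Finset.range (n i), (hookLen d n i j : ℤ)) *
        ∏ j ∈ Finset.univ.filter (fun j : Fin (d + 1) => i < j),
          (((n i + d - (i : ℕ) : ℕ) : ℤ) - ((n j + d - (j : ℕ) : ℕ) : ℤ))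
      = (Nat.factorial (n i + d - (i : ℕ)) : ℤ) := by
  have hn : Antitone n := hmono
  change _ * ∏ k ∈ _, ((shiftedLen d n i : ℤ) - shiftedLen d n k) =
    ((shiftedLen d n i).factorial : ℤ)
  rw [filter_lt_eq_Ioi, ← prod_hookLen_mul_prod_sub_shiftedLen hn i, Nat.cast_mul,
    Nat.cast_prod, Nat.cast_prod]
  congr 1
  refine prod_congr rfl fun k hk => ?_
  exact (Nat.cast_sub (shiftedLen_strictAnti hn (mem_Ioi.mp hk)).le).symm

/-- Equation (4) of the paper: for a partition `λ = (n_0, …, n_d)` with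
`n_0 ≥ … ≥ n_d ≥ 1`, `m_i = n_i + d - i`, and a fixed row `i`, the product of the hook
lengths of the cells in row `i` times `∏_{j=i+1}^d (m_i - m_j)` equals `m_i!`. -/
theorem statement11 (d : ℕ) (n : Fin (d + 1) → ℕ)
    (hmono : ∀ i j : Fin (d + 1), i ≤ j → n j ≤ n i) (hpos : ∀ i, 1 ≤ n i)
    (i : Fin (d + 1)) :
    (∏ j ∈ Finset.range (n i), (hookLen d n i j : ℤ)) *
        ∏ j ∈ Finset.univ.filter (fun j : Fin (d + 1) => i < j),
          (((n i + d - (i : ℕ) : ℕ) : ℤ) - ((n j + d - (j : ℕ) : ℕ) : ℤ))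
      = (Nat.factorial (n i + d - (i : ℕ)) : ℤ) :=
  statement11_general d n hmono i
end

section
/- Let d ≥ 0, let n_0 ≥ n_1 ≥ … ≥ n_d ≥ 1 be integers, let N = n_0 + n_1 + … + n_d, and set m_i = n_i + d − i. Then, as rational numbers, C*(N, n_0, …, n_d) = N! · V(m_0, …, m_d)/(m_0! ⋯ m_d!). -/
/-- `C*(N, n_0, …, n_d)`: the number of lists `(v_1, …, v_N)` of standard basis vectors
of `ℕ^{d+1}` summing to `(n_0, …, n_d)` all of whose partial sums are weakly decreasing
in the coordinates. -/
noncomputable def ballotCountS (d N : ℕ) (n : Fin (d + 1) → ℕ) : ℕ :=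
  Nat.card {v : Fin N → Fin (d + 1) → ℕ //
    (∀ k, ∃ i, v k = Pi.single i 1) ∧
    (∀ i, ∑ k, v k i = n i) ∧
    (∀ L : Fin N, ∀ i j : Fin (d + 1), i ≤ j →
      ∑ k ∈ Finset.univ.filter (fun k => k ≤ L), v k j ≤
        ∑ k ∈ Finset.univ.filter (fun k => k ≤ L), v k i)}

open Finset Matrix Polynomial

section Jacobi

variable {n R : Type*} [Fintype n] [DecidableEq n] [CommRing R]

theorem Matrix.sum_det_updateRow_eq_trace_mul_adjugate (A B : Matrix n n R) :
    ∑ i, (A.updateRow i (B i)).det = trace (B * adjugate A) := by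
  simp only [← cramer_transpose_apply, cramer_eq_adjugate_mulVec, ← adjugate_transpose, trace,
    diag_apply, mul_apply, mulVec, dotProduct, transpose_apply, mul_comm]

end Jacobi

section Vandermonde

variable {R : Type*} [CommRing R] [IsDomain R] {k : ℕ}

theorem Matrix.det_ascPochhammer_eval_eq_det_vandermonde (x : Fin k → R) :
    (of fun i j : Fin k => (ascPochhammer R j).eval (x i)).det = (vandermonde x).det :=
  (det_eval_matrixOfPolynomials_eq_det_vandermonde x _ (fun j => ascPochhammer_natDegree R j)
    (fun j => monic_ascPochhammer R j)).symm

theorem Matrix.sum_mul_det_vandermonde_add_single (x : Fin k → R) :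
    ∑ i, x i * (vandermonde (x + Pi.single i 1)).det
      = (∑ i, x i + ∑ j : Fin k, (j : R)) * (vandermonde x).det := by
  set A : Matrix (Fin k) (Fin k) R := of fun i j => (ascPochhammer R j).eval (x i)
  have hrow : ∀ i, x i * (vandermonde (x + Pi.single i 1)).det
      = (A.updateRow i fun j => (x i + j) * A i j).det := by
    intro i
    have hscaled : (fun j : Fin k => (x i + j) * A i j)
        = x i • fun j : Fin k => (ascPochhammer R j).eval (x i + 1) := by
      ext j
      have h1 := congrArg (eval (x i)) (ascPochhammer_succ_left R j)
      have h2 := congrArg (eval (x i)) (ascPochhammer_succ_right R j)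
      simp only [eval_mul, eval_X, eval_comp, eval_add, eval_one, eval_natCast] at h1 h2
      simp only [A, of_apply, Pi.smul_apply, smul_eq_mul]
      rw [← h1, h2, mul_comm]
    rw [hscaled, det_updateRow_smul, ← det_ascPochhammer_eval_eq_det_vandermonde]
    congr 2
    ext p j
    rcases eq_or_ne p i with rfl | hp
    · simp
    · simp [A, hp]
  have hB : (of fun i j : Fin k => (x i + j) * A i j)
      = diagonal x * A + A * diagonal fun j : Fin k => (j : R) := by
    ext i j
    simp [A, add_mul, mul_comm]
  calc ∑ i, x i * (vandermonde (x + Pi.single i 1)).det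
      = trace ((diagonal x * A + A * diagonal fun j : Fin k => (j : R)) * adjugate A) := by
        rw [← hB, ← sum_det_updateRow_eq_trace_mul_adjugate]
        exact Finset.sum_congr rfl fun i _ => hrow i
    _ = (∑ i, x i + ∑ j : Fin k, (j : R)) * (vandermonde x).det := by
        rw [add_mul, trace_add, Matrix.mul_assoc, mul_adjugate, trace_mul_comm (A * _),
          ← Matrix.mul_assoc, adjugate_mul, Matrix.mul_smul, Matrix.smul_mul, Matrix.mul_one,
          Matrix.one_mul, trace_smul, trace_smul, trace_diagonal, trace_diagonal,
          det_ascPochhammer_eval_eq_det_vandermonde, smul_eq_mul, smul_eq_mul]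
        ring

end Vandermonde

section vmd

variable {R : Type*} [CommRing R] {k : ℕ}

theorem vmd_eq_det_vandermonde_neg (x : Fin k → R) : vmd x = (vandermonde (-x)).det := by
  rw [det_vandermonde, vmd]
  refine prod_congr rfl fun i _ => prod_congr (by ext; simp) fun j _ => ?_
  simp only [Pi.neg_apply]
  ring

theorem vmd_eq_zero_of_eq (x : Fin k → R) {a b : Fin k} (hab : a < b) (h : x a = x b) :
    vmd x = 0 :=
  prod_eq_zero (mem_univ a) (prod_eq_zero (mem_filter.mpr ⟨mem_univ b, hab⟩) (sub_eq_zero.mpr h))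

theorem sum_mul_vmd_sub_single [IsDomain R] (x : Fin k → R) :
    ∑ i, x i * vmd (x - Pi.single i 1)
      = (∑ i, x i - ∑ j : Fin k, (j : R)) * vmd x := by
  have h := sum_mul_det_vandermonde_add_single (-x)
  have hupd : ∀ i, -x + Pi.single i 1 = -(x - Pi.single i 1) := fun i => by abel
  simp only [hupd, ← vmd_eq_det_vandermonde_neg, Pi.neg_apply, neg_mul, sum_neg_distrib] at h
  linear_combination -h

theorem vmd_staircase (d : ℕ) :
    vmd (fun i : Fin (d + 1) => ((d - i : ℕ) : R)) = d.superFactorial := by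
  rw [vmd_eq_det_vandermonde_neg, ← det_vandermonde_id_eq_superFactorial,
    ← det_vandermonde_sub (fun i : Fin (d + 1) => (i : R)) d]
  congr 2
  ext i
  simp [Nat.cast_sub (Nat.lt_succ_iff.mp i.isLt)]

end vmd

theorem Fin.sum_sub_val (d : ℕ) : ∑ i : Fin (d + 1), (d - i : ℕ) = ∑ i : Fin (d + 1), (i : ℕ) := by
  rw [← Equiv.sum_comp Fin.revPerm]
  exact sum_congr rfl fun i _ => by simp only [revPerm_apply, val_rev]; omega

theorem prod_factorial_staircase (d : ℕ) :
    ∏ i : Fin (d + 1), (d - i : ℕ).factorial = d.superFactorial := by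
  rw [← Equiv.prod_comp Fin.revPerm, ← Nat.prod_range_succ_factorial,
    ← Fin.prod_univ_eq_prod_range]
  exact prod_congr rfl fun i _ => by
    simp only [Fin.revPerm_apply, Fin.val_rev]
    congr 1
    omega

section TsubSingle

variable {ι : Type*} [DecidableEq ι] {f : ι → ℕ} {a : ι}

theorem tsub_single_one_of_eq_zero (h : f a = 0) : f - Pi.single a 1 = f := by
  ext b
  rcases eq_or_ne b a with rfl | hb <;> simp [*]

theorem Pi.single_one_le_of_one_le (h : 1 ≤ f a) : Pi.single a 1 ≤ f := by
  intro b
  rcases eq_or_ne b a with rfl | hb <;> simp [*]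

theorem sum_tsub_single_one [Fintype ι] {N : ℕ} (hsum : ∑ b, f b = N + 1) (h : 1 ≤ f a) :
    ∑ b, (f - Pi.single a 1 : ι → ℕ) b = N := by
  rw [Fintype.sum_congr _ _ fun b => Pi.sub_apply f _ b,
    sum_tsub_distrib _ fun b _ => Pi.single_one_le_of_one_le h b, sum_pi_single',
    if_pos (mem_univ a), hsum, Nat.add_sub_cancel]

theorem one_le_of_sum_tsub_single_one [Fintype ι] {N : ℕ} (hsum : ∑ b, f b = N + 1)
    (h : ∑ b, (f - Pi.single a 1 : ι → ℕ) b = N) : 1 ≤ f a := by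
  by_contra! h0
  rw [tsub_single_one_of_eq_zero (Nat.lt_one_iff.mp h0)] at h
  omega

theorem mul_prod_factorial_tsub_single_one [Fintype ι] (h : 1 ≤ f a) :
    f a * ∏ b, ((f - Pi.single a 1 : ι → ℕ) b).factorial = ∏ b, (f b).factorial := by
  rw [Fintype.prod_eq_mul_prod_compl a, Fintype.prod_eq_mul_prod_compl a (fun b => (f b).factorial),
    ← mul_assoc]
  congr 1
  · simp [Nat.mul_factorial_pred (by omega : f a ≠ 0)]
  · refine prod_congr rfl fun b hb => ?_
    rw [Pi.sub_apply, Pi.single_eq_of_ne (by simpa using hb), Nat.sub_zero]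

theorem Nat.cast_tsub_single_one {R : Type*} [Ring R] (h : 1 ≤ f a) :
    (fun b => ((f - Pi.single a 1 : ι → ℕ) b : R)) = (fun b => (f b : R)) - Pi.single a 1 := by
  ext b
  rcases eq_or_ne b a with rfl | hb
  · simp [Nat.cast_sub h]
  · simp [hb]

end TsubSingle

theorem Antitone.tsub_single_one {α : Type*} [PartialOrder α] [DecidableEq α] {n : α → ℕ}
    (hn : Antitone n) {i : α} (hi : ∀ j, i < j → n j < n i) : Antitone (n - Pi.single i 1) := by
  intro a b hab
  have := hn hab
  simp only [Pi.sub_apply, Pi.single_apply]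
  split_ifs with hb ha ha
  · omega
  · omega
  · subst ha
    have := hi b (lt_of_le_of_ne hab (Ne.symm hb))
    omega
  · omega

section BallotWords

variable {α : Type*} [DecidableEq α] {N : ℕ}

def letterCount (w : Fin N → α) (a : α) : ℕ := #{k | w k = a}

def prefixCount (w : Fin N → α) (L : Fin N) (a : α) : ℕ := #{k | k ≤ L ∧ w k = a}

theorem letterCount_snoc (w : Fin N → α) (a : α) :
    letterCount (Fin.snoc w a : Fin (N + 1) → α) = letterCount w + Pi.single a 1 := by
  ext b
  simp only [letterCount, card_filter, Fin.sum_univ_castSucc, Fin.snoc_castSucc, Fin.snoc_last,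
    Pi.add_apply, Pi.single_apply, eq_comm (a := a)]

theorem prefixCount_snoc_castSucc (w : Fin N → α) (a : α) (L : Fin N) :
    prefixCount (Fin.snoc w a : Fin (N + 1) → α) L.castSucc = prefixCount w L := by
  ext b
  simp only [prefixCount, card_filter, Fin.sum_univ_castSucc, Fin.castSucc_le_castSucc_iff,
    Fin.snoc_castSucc, (Fin.castSucc_lt_last L).not_ge, false_and, if_false, add_zero]

theorem prefixCount_last (w : Fin (N + 1) → α) : prefixCount w (Fin.last N) = letterCount w := by
  ext b
  simp [prefixCount, letterCount, Fin.le_last]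

theorem sum_letterCount [Fintype α] (w : Fin N → α) : ∑ a, letterCount w a = N := by
  simpa [letterCount] using (card_eq_sum_card_fiberwise (f := w) (s := univ) (t := univ)
    (fun _ _ => mem_univ _)).symm

variable [Fintype α] [Preorder α]

open scoped Classical in
/-- A word `w` stands for the list of basis vectors `(e_{w 0}, …, e_{w (N-1)})`. -/
noncomputable def ballotWords (n : α → ℕ) (N : ℕ) : Finset (Fin N → α) :=
  {w | letterCount w = n ∧ ∀ L, Antitone (prefixCount w L)}

variable {n : α → ℕ}

theorem mem_ballotWords {w : Fin N → α} :
    w ∈ ballotWords n N ↔ letterCount w = n ∧ ∀ L, Antitone (prefixCount w L) := by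
  simp [ballotWords]

theorem sum_eq_of_mem_ballotWords {w : Fin N → α} (hw : w ∈ ballotWords n N) : ∑ a, n a = N := by
  rw [← (mem_ballotWords.mp hw).1, sum_letterCount]

theorem antitone_of_mem_ballotWords {w : Fin N → α} (hw : w ∈ ballotWords n N) : Antitone n := by
  obtain ⟨hcount, hprefix⟩ := mem_ballotWords.mp hw
  cases N with
  | zero =>
    rw [← hcount]
    intro a b _
    simp [letterCount]
  | succ N => simpa [← hcount, prefixCount_last] using hprefix (Fin.last N)

theorem snoc_mem_ballotWords_iff (hn : Antitone n) (hsum : ∑ a, n a = N + 1) (w : Fin N → α)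
    (a : α) : Fin.snoc w a ∈ ballotWords n (N + 1) ↔ w ∈ ballotWords (n - Pi.single a 1) N := by
  simp only [mem_ballotWords, Fin.forall_fin_succ',
    prefixCount_snoc_castSucc, prefixCount_last, letterCount_snoc]
  constructor
  · rintro ⟨hcount, hprefix, -⟩
    exact ⟨eq_tsub_of_add_eq hcount, hprefix⟩
  · rintro ⟨hcount, hprefix⟩
    have ha : Pi.single a 1 ≤ n := Pi.single_one_le_of_one_le
      (one_le_of_sum_tsub_single_one hsum (by rw [← hcount, sum_letterCount]))
    refine ⟨by rw [hcount, tsub_add_cancel_of_le ha], hprefix, ?_⟩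
    rwa [hcount, tsub_add_cancel_of_le ha]

theorem ballotWords_zero : ballotWords (0 : α → ℕ) 0 = univ :=
  eq_univ_of_forall fun w => mem_ballotWords.mpr ⟨by ext a; simp [letterCount], finZeroElim⟩

theorem ballotWords_tsub_single_one_eq_empty {N : ℕ} {a : α} (hsum : ∑ b, n b = N + 1)
    (h : ¬(1 ≤ n a ∧ Antitone (n - Pi.single a 1))) : ballotWords (n - Pi.single a 1) N = ∅ :=
  eq_empty_of_forall_notMem fun _ hw => h ⟨one_le_of_sum_tsub_single_one hsum
    (sum_eq_of_mem_ballotWords hw), antitone_of_mem_ballotWords hw⟩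

theorem card_ballotWords_succ (hn : Antitone n) (hsum : ∑ a, n a = N + 1) :
    #(ballotWords n (N + 1)) = ∑ a, #(ballotWords (n - Pi.single a 1) N) := by
  rw [card_eq_sum_card_fiberwise (f := fun w => w (Fin.last N)) (t := univ)
    (fun _ _ => mem_univ _)]
  refine sum_congr rfl fun a _ => card_nbij' Fin.init (fun w => Fin.snoc w a) ?_ ?_ ?_ ?_
  · intro w hw
    obtain ⟨hmem, rfl⟩ := mem_filter.mp hw
    rw [mem_coe, ← snoc_mem_ballotWords_iff hn hsum, Fin.snoc_init_self]
    exact hmem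
  · intro w hw
    exact mem_filter.mpr ⟨(snoc_mem_ballotWords_iff hn hsum w a).mpr hw, Fin.snoc_last _ _⟩
  · intro w hw
    obtain ⟨-, rfl⟩ := mem_filter.mp hw
    exact Fin.snoc_init_self w
  · intro w _
    exact Fin.init_snoc _ _

end BallotWords

theorem sum_single_apply_eq_card_filter {ι α : Type*} [DecidableEq α] (s : Finset ι) (w : ι → α)
    (a : α) : ∑ k ∈ s, (Pi.single (w k) 1 : α → ℕ) a = #{k ∈ s | w k = a} := by
  rw [card_filter]
  exact sum_congr rfl fun k _ => by rw [Pi.single_apply]; exact if_congr eq_comm rfl rfl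

theorem ballotCountS_eq_card_ballotWords (d N : ℕ) (n : Fin (d + 1) → ℕ) :
    ballotCountS d N n = #(ballotWords n N) := by
  have key : ∀ w : Fin N → Fin (d + 1),
      ((∀ i, ∑ k, (Pi.single (w k) 1 : Fin (d + 1) → ℕ) i = n i) ∧
        ∀ L : Fin N, ∀ i j : Fin (d + 1), i ≤ j →
          ∑ k ∈ univ.filter (fun k => k ≤ L), (Pi.single (w k) 1 : Fin (d + 1) → ℕ) j ≤
            ∑ k ∈ univ.filter (fun k => k ≤ L), (Pi.single (w k) 1 : Fin (d + 1) → ℕ) i)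
        ↔ w ∈ ballotWords n N := by
    intro w
    simp only [sum_single_apply_eq_card_filter, filter_filter, mem_ballotWords, funext_iff]
    rfl
  rw [ballotCountS, ← Nat.card_eq_finsetCard]
  refine (Nat.card_eq_of_bijective
    (fun w : ballotWords n N => ⟨fun k => Pi.single (w.1 k) 1, fun k => ⟨_, rfl⟩,
      (key w).mpr w.2⟩) ⟨?_, ?_⟩).symm
  · intro w u h
    ext k : 2
    simpa [Pi.single_apply] using congrFun (congrFun (congrArg Subtype.val h) k) (w.1 k)
  · rintro ⟨v, hv, hrest⟩
    obtain ⟨w, hw⟩ := Classical.skolem.mp hv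
    simp only [hw] at hrest
    exact ⟨⟨w, (key w).mp hrest⟩, Subtype.ext (funext fun k => (hw k).symm)⟩

section HookFormula

variable {d : ℕ}

def shiftedParts (n : Fin (d + 1) → ℕ) (i : Fin (d + 1)) : ℕ := n i + d - i

noncomputable def hookFormula (n : Fin (d + 1) → ℕ) : ℚ :=
  ((∑ i, n i).factorial : ℚ) * vmd (fun i => (shiftedParts n i : ℚ)) /
    ∏ i, ((shiftedParts n i).factorial : ℚ)

variable {n : Fin (d + 1) → ℕ}

theorem shiftedParts_tsub_single_one {i : Fin (d + 1)} (hi : 1 ≤ n i) :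
    shiftedParts (n - Pi.single i 1) = shiftedParts n - Pi.single i 1 := by
  ext j
  have := j.is_le
  rcases eq_or_ne j i with rfl | hj
  · simp only [shiftedParts, Pi.sub_apply, Pi.single_eq_same]
    omega
  · simp [shiftedParts, hj]

theorem one_le_shiftedParts {i : Fin (d + 1)} (hi : 1 ≤ n i) : 1 ≤ shiftedParts n i := by
  have := i.is_le
  unfold shiftedParts
  omega

theorem sum_shiftedParts_sub :
    ∑ i, (shiftedParts n i : ℚ) - ∑ j : Fin (d + 1), (j : ℚ) = ∑ i, n i := by
  have h : ∑ i, shiftedParts n i = ∑ i, n i + ∑ i : Fin (d + 1), (i : ℕ) := by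
    rw [← Fin.sum_sub_val, ← sum_add_distrib]
    exact sum_congr rfl fun i _ => by have := i.is_le; unfold shiftedParts; omega
  rw [← Nat.cast_sum, h]
  push_cast
  ring

theorem hookFormula_zero : hookFormula (0 : Fin (d + 1) → ℕ) = 1 := by
  have h : ∀ i : Fin (d + 1), shiftedParts 0 i = d - i := fun i => by simp [shiftedParts]
  simp only [hookFormula, h, vmd_staircase, Pi.zero_apply, sum_const_zero, Nat.factorial_zero,
    Nat.cast_one, one_mul]
  rw [← prod_factorial_staircase, Nat.cast_prod,
    div_self (prod_ne_zero_iff.mpr fun i _ => by positivity)]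

theorem hookFormula_eq_sum {N : ℕ} (hsum : ∑ i, n i = N + 1) :
    hookFormula n = (N.factorial : ℚ) / (∏ i, ((shiftedParts n i).factorial : ℚ)) *
      ∑ i, (shiftedParts n i : ℚ) * vmd ((fun j => (shiftedParts n j : ℚ)) - Pi.single i 1) := by
  rw [sum_mul_vmd_sub_single, sum_shiftedParts_sub, hookFormula, hsum, Nat.factorial_succ]
  push_cast
  ring

theorem hookFormula_tsub_single_one {N : ℕ} {i : Fin (d + 1)} (hsum : ∑ j, n j = N + 1)
    (hi : 1 ≤ n i) :
    hookFormula (n - Pi.single i 1) =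
      (N.factorial : ℚ) / (∏ j, ((shiftedParts n j).factorial : ℚ)) *
      ((shiftedParts n i : ℚ) * vmd ((fun j => (shiftedParts n j : ℚ)) - Pi.single i 1)) := by
  have hprod : (shiftedParts n i : ℚ) *
      ∏ j, (((shiftedParts n - Pi.single i 1 : Fin (d + 1) → ℕ) j).factorial : ℚ)
        = ∏ j, ((shiftedParts n j).factorial : ℚ) := by
    exact_mod_cast mul_prod_factorial_tsub_single_one (one_le_shiftedParts hi)
  have hm : (shiftedParts n i : ℚ) ≠ 0 := by
    have := one_le_shiftedParts hi
    positivity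
  rw [hookFormula, sum_tsub_single_one hsum hi, shiftedParts_tsub_single_one hi,
    Nat.cast_tsub_single_one (one_le_shiftedParts hi), ← hprod]
  field_simp

theorem mul_vmd_sub_single_eq_zero (hn : Antitone n) {i : Fin (d + 1)}
    (h : ¬(1 ≤ n i ∧ Antitone (n - Pi.single i 1))) :
    (shiftedParts n i : ℚ) * vmd ((fun j => (shiftedParts n j : ℚ)) - Pi.single i 1) = 0 := by
  rcases eq_or_ne i (Fin.last d) with rfl | hlast
  · rcases Nat.eq_zero_or_pos (n (Fin.last d)) with h0 | hpos
    · simp [shiftedParts, h0]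
    · exact absurd ⟨hpos, hn.tsub_single_one fun j hj => absurd hj (Fin.le_last j).not_gt⟩ h
  · have hid : (i : ℕ) < d := Fin.val_lt_last hlast
    set i' : Fin (d + 1) := ⟨i + 1, by omega⟩
    have hii' : i < i' := Fin.lt_def.mpr (Nat.lt_succ_self _)
    rcases (hn hii'.le).lt_or_eq with hlt | heq
    · refine absurd ⟨by omega, hn.tsub_single_one fun j hj => (hn ?_).trans_lt hlt⟩ h
      exact Fin.le_def.mpr (Fin.lt_def.mp hj)
    · have hstep : shiftedParts n i = shiftedParts n i' + 1 := by
        simp only [shiftedParts, i', heq]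
        omega
      refine mul_eq_zero_of_right _ (vmd_eq_zero_of_eq _ hii' ?_)
      simp [hstep, hii'.ne']

end HookFormula

theorem card_ballotWords_eq_hookFormula {d : ℕ} :
    ∀ N (n : Fin (d + 1) → ℕ), Antitone n → ∑ i, n i = N →
      (#(ballotWords n N) : ℚ) = hookFormula n
  | 0, n, _, hsum => by
    obtain rfl : n = 0 := funext fun i => (sum_eq_zero_iff.mp hsum) i (mem_univ i)
    simp [ballotWords_zero, hookFormula_zero]
  | N + 1, n, hn, hsum => by
    rw [card_ballotWords_succ hn hsum, hookFormula_eq_sum hsum, Nat.cast_sum, mul_sum]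
    refine sum_congr rfl fun i _ => ?_
    by_cases h : 1 ≤ n i ∧ Antitone (n - Pi.single i 1)
    · rw [card_ballotWords_eq_hookFormula N _ h.2 (sum_tsub_single_one hsum h.1),
        hookFormula_tsub_single_one hsum h.1]
    · rw [ballotWords_tsub_single_one_eq_empty hsum h, mul_vmd_sub_single_eq_zero hn h]
      simp

theorem statement15_general (d : ℕ) (n : Fin (d + 1) → ℕ)
    (hmono : ∀ i j : Fin (d + 1), i ≤ j → n j ≤ n i) :
    (ballotCountS d (∑ i, n i) n : ℚ)
      = (Nat.factorial (∑ i, n i) : ℚ) *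
          vmd (fun i : Fin (d + 1) => ((n i + d - (i : ℕ) : ℕ) : ℚ)) /
            ∏ i : Fin (d + 1), (Nat.factorial (n i + d - (i : ℕ)) : ℚ) := by
  rw [ballotCountS_eq_card_ballotWords]
  exact card_ballotWords_eq_hookFormula _ n hmono rfl

/-- Equation (5) of the paper (the Hook Length Formula in Vandermonde form): for
`n_0 ≥ … ≥ n_d ≥ 1`, `N = n_0 + ⋯ + n_d`, and `m_i = n_i + d - i`,
`C*(N, n_0, …, n_d) = N! · V(m_0, …, m_d)/(m_0! ⋯ m_d!)`. -/
theorem statement15 (d : ℕ) (n : Fin (d + 1) → ℕ)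
    (hmono : ∀ i j : Fin (d + 1), i ≤ j → n j ≤ n i) (hpos : ∀ i, 1 ≤ n i) :
    (ballotCountS d (∑ i, n i) n : ℚ)
      = (Nat.factorial (∑ i, n i) : ℚ) *
          vmd (fun i : Fin (d + 1) => ((n i + d - (i : ℕ) : ℕ) : ℚ)) /
            ∏ i : Fin (d + 1), (Nat.factorial (n i + d - (i : ℕ)) : ℚ) :=
  statement15_general d n hmono
end
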